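/- arXiv:2205.13328 — 5 statements merged into one kernel-verified Lean document; each statement's English description precedes it below -/
import Mathlib

section
/- Let G1 and G2 be finite simple graphs that are indistinguishable by 3-WL. Then for every K ≥ 1, every L ≥ 1, every kernel t ∈ {spd, gd}, and every K-hop message passing GNN with L layers (arbitrary message, update, combine and readout functions, constant initial node features), the graph representations satisfy h_{G1} = h_{G2}. In other words, the expressive power of K-hop message passing with either kernel is bounded by the 3-WL test. -/
/-!
The 3-WL color of a triple determines, for any two of its entries, the lengths of walks between
them: a walk of length `k + 1` from `w i` to `w j` is an edge to some `x` followed by a walk of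
length `k` from `x` to `w j`, and 3-WL refinement varies the third entry over all such `x` through
a color-preserving bijection. Both kernels read the `k`-hop neighborhoods off these walk lengths
(and off equality of vertices), so the same bijection matches the `k`-hop neighborhoods of an
entry. By induction on the layer, the GNN feature of an entry of a triple is then a function of the
triple's 3-WL color.
-/

namespace KHopStmt1

/-- The two kernels of K-hop neighbors. -/
inductive Kernel
  | spd
  | gd

/-- k-th hop neighbors under the shortest-path-distance kernel: vertices at graph
distance exactly `k` from `v`. -/
noncomputable def Qspd {V : Type*} [Fintype V] (G : SimpleGraph V) (v : V) (k : ℕ) :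
    Finset V := by
  classical
  exact Finset.univ.filter fun u => G.Reachable v u ∧ G.dist v u = k

/-- k-th hop neighbors under the graph-diffusion kernel: vertices `u ≠ v` admitting a
walk of length exactly `k` from `v` to `u` (and `{v}` itself for `k = 0`). -/
noncomputable def Qgd {V : Type*} [Fintype V] (G : SimpleGraph V) (v : V) (k : ℕ) :
    Finset V := by
  classical
  exact if k = 0 then {v}
    else Finset.univ.filter fun u => u ≠ v ∧ ∃ w : G.Walk v u, w.length = k

/-- k-th hop neighbors under kernel `t`. -/
noncomputable def Qhop {V : Type*} [Fintype V] (t : Kernel) (G : SimpleGraph V) (v : V)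
    (k : ℕ) : Finset V :=
  match t with
  | .spd => Qspd G v k
  | .gd => Qgd G v k

/-- Node features computed by a K-hop message passing GNN with kernel `t`:
`h^0_v = h0` (constant initial features), and for each layer
`m^{l,k}_v = MES l k {{h^{l-1}_u : u ∈ Q^{k,t}_v}}`, `h^{l,k}_v = UPD l k m^{l,k}_v h^{l-1}_v`,
`h^l_v = COMBINE l {{h^{l,k}_v : k = 1,…,K}}`. -/
noncomputable def gnnFeat {V : Type*} [Fintype V] (t : Kernel) (K : ℕ)
    {H M : Type} (h0 : H) (MES : ℕ → ℕ → Multiset H → M)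
    (UPD : ℕ → ℕ → M → H → H) (COMB : ℕ → Multiset H → H)
    (G : SimpleGraph V) : ℕ → V → H
  | 0, _ => h0
  | (l + 1), v =>
      COMB (l + 1)
        (((List.range K).map fun k =>
            UPD (l + 1) (k + 1)
              (MES (l + 1) (k + 1)
                ((Qhop t G v (k + 1)).val.map (gnnFeat t K h0 MES UPD COMB G l)))
              (gnnFeat t K h0 MES UPD COMB G l v) : List H) : Multiset H)

/-- Graph representation: `h_G = READOUT {{h^L_v : v ∈ V}}`. -/
noncomputable def gnnGraphRep {V : Type*} [Fintype V] (t : Kernel) (K : ℕ)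
    {H M B : Type} (h0 : H) (MES : ℕ → ℕ → Multiset H → M)
    (UPD : ℕ → ℕ → M → H → H) (COMB : ℕ → Multiset H → H)
    (READOUT : Multiset H → B) (G : SimpleGraph V) (L : ℕ) : B :=
  READOUT (Finset.univ.val.map (gnnFeat t K h0 MES UPD COMB G L))

/-- 3-WL color refinement, expressed as a relation comparing the iteration-`l` colors of
a triple of vertices of `G1` with those of a triple of vertices of `G2`. The initial
color records which entries of the triple are equal and which pairs are adjacent; one
refinement step additionally compares, for each coordinate `j`, the multisets of colors
obtained by replacing the j-th entry by an arbitrary vertex (multiset equality being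
expressed by the existence of a color-preserving bijection of the vertex sets). -/
def TWLEquiv {V1 V2 : Type*} (G1 : SimpleGraph V1) (G2 : SimpleGraph V2) :
    ℕ → (Fin 3 → V1) → (Fin 3 → V2) → Prop
  | 0, w1, w2 => ∀ i j : Fin 3,
      (w1 i = w1 j ↔ w2 i = w2 j) ∧ (G1.Adj (w1 i) (w1 j) ↔ G2.Adj (w2 i) (w2 j))
  | (l + 1), w1, w2 => TWLEquiv G1 G2 l w1 w2 ∧
      ∀ j : Fin 3, ∃ σ : V1 ≃ V2, ∀ u : V1,
        TWLEquiv G1 G2 l (Function.update w1 j u) (Function.update w2 j (σ u))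

/-- Two graphs are indistinguishable by 3-WL if for every iteration the multisets of
colors of all triples coincide, i.e. there is a color-preserving bijection of triples. -/
def TWLIndistinguishable {V1 V2 : Type*} (G1 : SimpleGraph V1) (G2 : SimpleGraph V2) :
    Prop :=
  ∀ l : ℕ, ∃ σ : (Fin 3 → V1) ≃ (Fin 3 → V2), ∀ w, TWLEquiv G1 G2 l w (σ w)

def HasWalkOfLength {V : Type*} (G : SimpleGraph V) (u v : V) (k : ℕ) : Prop :=
  ∃ p : G.Walk u v, p.length = k

section Walks

variable {V : Type*} (G : SimpleGraph V)

lemma hasWalkOfLength_zero_iff {u v : V} : HasWalkOfLength G u v 0 ↔ u = v :=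
  SimpleGraph.Walk.exists_length_eq_zero_iff

lemma hasWalkOfLength_succ_iff {u v : V} {k : ℕ} :
    HasWalkOfLength G u v (k + 1) ↔ ∃ x, G.Adj u x ∧ HasWalkOfLength G x v k := by
  constructor
  · rintro ⟨_ | ⟨hadj, p⟩, hp⟩
    · simp at hp
    · exact ⟨_, hadj, p, by simpa using hp⟩
  · rintro ⟨x, hadj, p, rfl⟩
    exact ⟨.cons hadj p, rfl⟩

variable [Fintype V]

lemma mem_Qspd_iff {v u : V} {k : ℕ} :
    u ∈ Qspd G v k ↔ HasWalkOfLength G v u k ∧ ∀ k' < k, ¬HasWalkOfLength G v u k' := by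
  classical
  simp only [Qspd, Finset.mem_filter, Finset.mem_univ, true_and]
  constructor
  · rintro ⟨hr, rfl⟩
    exact ⟨hr.exists_walk_length_eq_dist,
      fun k' hk' ⟨p, hp⟩ => (SimpleGraph.dist_le p).not_gt (hp ▸ hk')⟩
  · rintro ⟨⟨p, rfl⟩, hmin⟩
    have hr : G.Reachable v u := ⟨p⟩
    refine ⟨hr, (SimpleGraph.dist_le p).antisymm (not_lt.mp fun hlt => ?_)⟩
    exact hmin _ hlt hr.exists_walk_length_eq_dist

lemma mem_Qgd_succ_iff {v u : V} {k : ℕ} :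
    u ∈ Qgd G v (k + 1) ↔ u ≠ v ∧ HasWalkOfLength G v u (k + 1) := by
  classical
  simp [Qgd, HasWalkOfLength]

end Walks

lemma mem_Qhop_iff_of_hasWalkOfLength_iff {V1 V2 : Type*} [Fintype V1] [Fintype V2]
    {G1 : SimpleGraph V1} {G2 : SimpleGraph V2} (t : Kernel) {v1 u1 : V1} {v2 u2 : V2} {k : ℕ}
    (heq : u1 = v1 ↔ u2 = v2)
    (hwalk : ∀ k' ≤ k, HasWalkOfLength G1 v1 u1 k' ↔ HasWalkOfLength G2 v2 u2 k') :
    u1 ∈ Qhop t G1 v1 k ↔ u2 ∈ Qhop t G2 v2 k := by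
  cases t with
  | spd =>
    simp only [Qhop, mem_Qspd_iff]
    exact and_congr (hwalk k le_rfl)
      (forall₂_congr fun k' hk' => not_congr (hwalk k' hk'.le))
  | gd =>
    cases k with
    | zero => simpa [Qhop, Qgd] using heq
    | succ k =>
      simp only [Qhop, mem_Qgd_succ_iff]
      exact and_congr (not_congr heq) (hwalk _ le_rfl)

lemma Finset.val_map_eq_of_equiv {α β γ : Type*} (σ : α ≃ β) {s : Finset α} {t : Finset β}
    (hst : ∀ a, a ∈ s ↔ σ a ∈ t)
    {f : α → γ} {g : β → γ} (hfg : ∀ a, f a = g (σ a)) :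
    s.val.map f = t.val.map g := by
  have ht : t = s.map σ.toEmbedding := by
    ext b
    simpa using (hst (σ.symm b)).symm
  rw [ht, Finset.map_val, Multiset.map_map]
  exact Multiset.map_congr rfl fun a _ => hfg a

namespace TWLEquiv

variable {V1 V2 : Type*} {G1 : SimpleGraph V1} {G2 : SimpleGraph V2} {l : ℕ}
  {w1 : Fin 3 → V1} {w2 : Fin 3 → V2}

lemma mono (h : TWLEquiv G1 G2 l w1 w2) {l' : ℕ} (hl : l' ≤ l) : TWLEquiv G1 G2 l' w1 w2 := by
  induction hl with
  | refl => exact h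
  | step _ ih => exact ih h.1

lemma eq_iff (h : TWLEquiv G1 G2 l w1 w2) (i j : Fin 3) : w1 i = w1 j ↔ w2 i = w2 j :=
  (h.mono (Nat.zero_le l) i j).1

lemma adj_iff (h : TWLEquiv G1 G2 l w1 w2) (i j : Fin 3) :
    G1.Adj (w1 i) (w1 j) ↔ G2.Adj (w2 i) (w2 j) :=
  (h.mono (Nat.zero_le l) i j).2

lemma hasWalkOfLength_iff {k : ℕ} (hk : k ≤ l) (h : TWLEquiv G1 G2 l w1 w2) {i j s : Fin 3}
    (hij : i ≠ j) (hsi : s ≠ i) (hsj : s ≠ j) :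
    HasWalkOfLength G1 (w1 i) (w1 j) k ↔ HasWalkOfLength G2 (w2 i) (w2 j) k := by
  induction k generalizing l w1 w2 i j s with
  | zero => simpa only [hasWalkOfLength_zero_iff] using h.eq_iff i j
  | succ k ih =>
    obtain ⟨l, rfl⟩ := Nat.exists_eq_add_of_le' (show 1 ≤ l by omega)
    obtain ⟨σ, hσ⟩ := h.2 s
    simp only [hasWalkOfLength_succ_iff]
    -- the intermediate vertex `x` of the walk is put into the `s`-th entry of the triple
    refine σ.exists_congr fun x => ?_
    have := and_congr ((hσ x).adj_iff i s) (ih (by omega) (hσ x) hsj hsi.symm hij)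
    simpa only [Function.update_self, Function.update_of_ne hsi.symm,
      Function.update_of_ne hsj.symm] using this

lemma mem_Qhop_iff [Fintype V1] [Fintype V2] (t : Kernel) {k : ℕ} (hk : k ≤ l)
    (h : TWLEquiv G1 G2 l w1 w2) {i j s : Fin 3} (hij : i ≠ j) (hsi : s ≠ i) (hsj : s ≠ j) :
    w1 j ∈ Qhop t G1 (w1 i) k ↔ w2 j ∈ Qhop t G2 (w2 i) k :=
  mem_Qhop_iff_of_hasWalkOfLength_iff t (h.eq_iff j i) fun _ hk' =>
    h.hasWalkOfLength_iff (hk'.trans hk) hij hsi hsj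

end TWLEquiv

lemma Fin.exists_ne_ne_ne (j : Fin 3) : ∃ m i : Fin 3, m ≠ j ∧ i ≠ j ∧ i ≠ m := by
  fin_cases j <;> decide

lemma gnnFeat_eq_of_twlEquiv {V1 V2 : Type*} [Fintype V1] [Fintype V2]
    {G1 : SimpleGraph V1} {G2 : SimpleGraph V2} (t : Kernel) (K : ℕ)
    {H M : Type} (h0 : H) (MES : ℕ → ℕ → Multiset H → M)
    (UPD : ℕ → ℕ → M → H → H) (COMB : ℕ → Multiset H → H)
    {d l : ℕ} (hdl : d + K ≤ l)
    {w1 : Fin 3 → V1} {w2 : Fin 3 → V2} (h : TWLEquiv G1 G2 l w1 w2) (j : Fin 3) :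
    gnnFeat t K h0 MES UPD COMB G1 d (w1 j) = gnnFeat t K h0 MES UPD COMB G2 d (w2 j) := by
  induction d generalizing l w1 w2 j with
  | zero => rfl
  | succ d ih =>
    obtain ⟨l, rfl⟩ := Nat.exists_eq_add_of_le' (show 1 ≤ l by omega)
    obtain ⟨m, i, hmj, hij, him⟩ := Fin.exists_ne_ne_ne j
    obtain ⟨σ, hσ⟩ := h.2 m
    have hfeat (u : V1) : gnnFeat t K h0 MES UPD COMB G1 d u =
        gnnFeat t K h0 MES UPD COMB G2 d (σ u) := by
      simpa using ih (by omega) (hσ u) m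
    have hQ (k : ℕ) (hk : k ≤ K) (u : V1) :
        u ∈ Qhop t G1 (w1 j) k ↔ σ u ∈ Qhop t G2 (w2 j) k := by
      simpa [Function.update_of_ne hmj.symm] using
        (hσ u).mem_Qhop_iff t (by omega) hmj.symm hij him
    simp only [gnnFeat]
    congr 2
    refine List.map_congr_left fun k hk => ?_
    rw [Finset.val_map_eq_of_equiv σ (hQ (k + 1) (List.mem_range.mp hk)) hfeat,
      ih (by omega) h.1 j]

lemma TWLIndistinguishable.exists_equiv_twlEquiv {V1 V2 : Type*} {G1 : SimpleGraph V1}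
    {G2 : SimpleGraph V2} (hindist : TWLIndistinguishable G1 G2) (l : ℕ) :
    ∃ σ : V1 ≃ V2, ∀ u, ∃ w1 w2, w1 0 = u ∧ w2 0 = σ u ∧ TWLEquiv G1 G2 l w1 w2 := by
  obtain ⟨σT, hσT⟩ := hindist (l + 1)
  cases isEmpty_or_nonempty V1 with
  | inl hV1 =>
    have : IsEmpty V2 := ⟨fun v => isEmptyElim (σT.symm (fun _ => v) 0)⟩
    exact ⟨Equiv.equivOfIsEmpty V1 V2, isEmptyElim⟩
  | inr hV1 =>
    obtain ⟨v⟩ := hV1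
    obtain ⟨σ, hσ⟩ := (hσT fun _ => v).2 0
    exact ⟨σ, fun u => ⟨_, _, Function.update_self .., Function.update_self .., hσ u⟩⟩

theorem khop_bounded_by_3WL_general {V1 V2 : Type*} [Fintype V1] [Fintype V2]
    (G1 : SimpleGraph V1) (G2 : SimpleGraph V2)
    (hindist : TWLIndistinguishable G1 G2)
    (K L : ℕ) (t : Kernel)
    {H M B : Type} (h0 : H) (MES : ℕ → ℕ → Multiset H → M)
    (UPD : ℕ → ℕ → M → H → H) (COMB : ℕ → Multiset H → H)
    (READOUT : Multiset H → B) :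
    gnnGraphRep t K h0 MES UPD COMB READOUT G1 L =
      gnnGraphRep t K h0 MES UPD COMB READOUT G2 L := by
  obtain ⟨σ, hσ⟩ := hindist.exists_equiv_twlEquiv (L + K)
  refine congrArg READOUT (Finset.val_map_eq_of_equiv σ (by simp) fun u => ?_)
  obtain ⟨w1, w2, rfl, hw2, h⟩ := hσ u
  rw [← hw2]
  exact gnnFeat_eq_of_twlEquiv t K h0 MES UPD COMB le_rfl h 0

/-- The expressive power of K-hop message passing (with either kernel)
is bounded by the 3-WL test: 3-WL-indistinguishable graphs receive equal graph
representations from every K-hop message passing GNN on constant initial features. -/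
theorem khop_bounded_by_3WL {V1 V2 : Type*} [Fintype V1] [Fintype V2]
    (G1 : SimpleGraph V1) (G2 : SimpleGraph V2)
    (hindist : TWLIndistinguishable G1 G2)
    (K L : ℕ) (hK : 1 ≤ K) (hL : 1 ≤ L) (t : Kernel)
    {H M B : Type} (h0 : H) (MES : ℕ → ℕ → Multiset H → M)
    (UPD : ℕ → ℕ → M → H → H) (COMB : ℕ → Multiset H → H)
    (READOUT : Multiset H → B) :
    gnnGraphRep t K h0 MES UPD COMB READOUT G1 L =
      gnnGraphRep t K h0 MES UPD COMB READOUT G2 L :=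
  khop_bounded_by_3WL_general G1 G2 hindist K L t h0 MES UPD COMB READOUT

end KHopStmt1
end

section
/- Fix K ≥ 2 and a kernel t ∈ {spd, gd}. (i) For all finite simple graphs G1, G2, vertices v1 ∈ G1, v2 ∈ G2, and every iteration l, if the K-hop color refinement with kernel t assigns v1 and v2 equal colors at iteration l, then 1-WL color refinement assigns them equal colors at iteration l. (ii) There exist finite simple graphs G1 and G2 with the same number of vertices such that 1-WL yields equal multisets of vertex colors at every iteration, while the 2-hop color refinement with kernel t yields different multisets of vertex colors already after one iteration. Hence a proper K-hop message passing GNN with K > 1 is strictly more powerful than 1-hop message passing GNNs. -/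
/-!
Under either kernel the first hop is the ordinary neighbourhood, so the `k = 1` component of a
K-hop color contains the 1-WL color, and K-hop refinement refines 1-WL by induction on the
iteration. Conversely, 1-WL never separates two `d`-regular graphs: all their vertices keep one
common color. The 8-cycle and two disjoint 4-cycles are both 2-regular, but a vertex of the
8-cycle has two vertices at distance two, while a vertex of a 4-cycle has only the opposite one;
as neither graph has triangles, the graph-diffusion kernel sees the same second hop.
-/

namespace KHopStmt2

/-- The two kernels of K-hop neighbors. -/
inductive Kernel
  | spd
  | gd

/-- k-th hop neighbors under the shortest-path-distance kernel: vertices at graph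
distance exactly `k` from `v`. -/
noncomputable def Qspd {V : Type*} [Fintype V] (G : SimpleGraph V) (v : V) (k : ℕ) :
    Finset V := by
  classical
  exact Finset.univ.filter fun u => G.Reachable v u ∧ G.dist v u = k

/-- k-th hop neighbors under the graph-diffusion kernel: vertices `u ≠ v` admitting a
walk of length exactly `k` from `v` to `u` (and `{v}` itself for `k = 0`). -/
noncomputable def Qgd {V : Type*} [Fintype V] (G : SimpleGraph V) (v : V) (k : ℕ) :
    Finset V := by
  classical
  exact if k = 0 then {v}
    else Finset.univ.filter fun u => u ≠ v ∧ ∃ w : G.Walk v u, w.length = k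

/-- k-th hop neighbors under kernel `t`. -/
noncomputable def Qhop {V : Type*} [Fintype V] (t : Kernel) (G : SimpleGraph V) (v : V)
    (k : ℕ) : Finset V :=
  match t with
  | .spd => Qspd G v k
  | .gd => Qgd G v k

/-- 1-WL color refinement, expressed as a relation comparing the iteration-`l` colors
of a vertex of `G1` with a vertex of `G2`: all vertices share the constant initial
color, and `c_{l+1}(v) = (c_l(v), {{c_l(u) : u adjacent to v}})`, multiset equality
being expressed by a color-preserving bijection of neighborhoods. -/
def WLEquiv {V1 V2 : Type*} (G1 : SimpleGraph V1) (G2 : SimpleGraph V2) :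
    ℕ → V1 → V2 → Prop
  | 0, _, _ => True
  | (l + 1), v, u => WLEquiv G1 G2 l v u ∧
      ∃ σ : G1.neighborSet v ≃ G2.neighborSet u,
        ∀ w : G1.neighborSet v, WLEquiv G1 G2 l w.1 (σ w).1

/-- K-hop color refinement with kernel `t`: all vertices share the constant initial
color, and `c_{l+1}(v) = (c_l(v), ({{c_l(u) : u ∈ Q^{k,t}_v}})_{k=1,…,K})`. -/
def KhopEquiv {V1 V2 : Type*} [Fintype V1] [Fintype V2] (K : ℕ) (t : Kernel)
    (G1 : SimpleGraph V1) (G2 : SimpleGraph V2) : ℕ → V1 → V2 → Prop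
  | 0, _, _ => True
  | (l + 1), v, u => KhopEquiv K t G1 G2 l v u ∧
      ∀ k : ℕ, 1 ≤ k → k ≤ K →
        ∃ σ : {w // w ∈ Qhop t G1 v k} ≃ {w // w ∈ Qhop t G2 u k},
          ∀ w : {w // w ∈ Qhop t G1 v k}, KhopEquiv K t G1 G2 l w.1 (σ w).1

open SimpleGraph Finset

lemma _root_.SimpleGraph.Walk.exists_length_eq_two_iff {V : Type*} {G : SimpleGraph V} {v u : V} :
    (∃ w : G.Walk v u, w.length = 2) ↔ ∃ x, G.Adj v x ∧ G.Adj x u := by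
  rw [← nonempty_subtype, (G.walkLengthTwoEquivCommonNeighbors v u).nonempty_congr]
  simp [mem_commonNeighbors, G.adj_comm u]

section Neighbors

variable {V : Type*} [Fintype V] {G : SimpleGraph V} {v u : V} {k : ℕ}

lemma mem_Qspd (hk : k ≠ 0) : u ∈ Qspd G v k ↔ G.edist v u = k := by
  classical
  simp only [Qspd, mem_filter, mem_univ, true_and, SimpleGraph.dist, ENat.toNat_eq_iff hk]
  exact and_iff_right_of_imp fun h => edist_ne_top_iff_reachable.mp (by simp [h])

lemma mem_Qgd (hk : k ≠ 0) : u ∈ Qgd G v k ↔ u ≠ v ∧ ∃ w : G.Walk v u, w.length = k := by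
  classical
  simp [Qgd, hk]

lemma mem_Qhop_one (t : Kernel) : u ∈ Qhop t G v 1 ↔ G.Adj v u := by
  cases t
  · exact (mem_Qspd one_ne_zero).trans (by exact_mod_cast edist_eq_one_iff_adj)
  · rw [Qhop, mem_Qgd one_ne_zero, Walk.exists_length_eq_one_iff]
    exact and_iff_right_of_imp Adj.ne'

variable (G v) in
def qhopOneEquivNeighborSet (t : Kernel) : {w // w ∈ Qhop t G v 1} ≃ G.neighborSet v :=
  Equiv.subtypeEquivRight fun _ => mem_Qhop_one t

variable [DecidableEq V] [DecidableRel G.Adj]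

lemma Qspd_two :
    Qspd G v 2 = ({u | u ≠ v ∧ ¬ G.Adj v u ∧ ∃ x, G.Adj v x ∧ G.Adj x u} : Finset V) := by
  ext u
  rw [mem_Qspd two_ne_zero, Nat.cast_ofNat, edist_eq_two_iff]
  simp [Set.Nonempty, mem_commonNeighbors, G.adj_comm u, ne_comm]

lemma Qgd_two : Qgd G v 2 = ({u | u ≠ v ∧ ∃ x, G.Adj v x ∧ G.Adj x u} : Finset V) := by
  ext u
  rw [mem_Qgd two_ne_zero, Walk.exists_length_eq_two_iff]
  simp

end Neighbors

section Refinement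

variable {V1 V2 : Type*} {G1 : SimpleGraph V1} {G2 : SimpleGraph V2}

lemma wlEquiv_of_khopEquiv [Fintype V1] [Fintype V2] {K : ℕ} (hK : 1 ≤ K) {t : Kernel} :
    ∀ {l : ℕ} {v1 : V1} {v2 : V2}, KhopEquiv K t G1 G2 l v1 v2 → WLEquiv G1 G2 l v1 v2
  | 0, _, _, _ => trivial
  | l + 1, v1, v2, ⟨hl, hhop⟩ => by
    obtain ⟨σ, hσ⟩ := hhop 1 le_rfl hK
    let e1 := qhopOneEquivNeighborSet G1 v1 t
    exact ⟨wlEquiv_of_khopEquiv hK hl, (e1.symm.trans σ).trans (qhopOneEquivNeighborSet G2 v2 t),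
      fun w => wlEquiv_of_khopEquiv hK (hσ (e1.symm w))⟩

lemma card_Qhop_eq_of_khopEquiv [Fintype V1] [Fintype V2] {K l k : ℕ} {t : Kernel}
    {v1 : V1} {v2 : V2} (h : KhopEquiv K t G1 G2 (l + 1) v1 v2) (hk : 1 ≤ k) (hkK : k ≤ K) :
    #(Qhop t G1 v1 k) = #(Qhop t G2 v2 k) := by
  obtain ⟨σ, -⟩ := h.2 k hk hkK
  simpa using Fintype.card_congr σ

lemma wlEquiv_of_isRegularOfDegree [G1.LocallyFinite] [G2.LocallyFinite] {d : ℕ}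
    (h1 : G1.IsRegularOfDegree d) (h2 : G2.IsRegularOfDegree d) :
    ∀ (l : ℕ) (v1 : V1) (v2 : V2), WLEquiv G1 G2 l v1 v2
  | 0, _, _ => trivial
  | l + 1, v1, v2 => by
    have hcard : Fintype.card (G1.neighborSet v1) = Fintype.card (G2.neighborSet v2) := by
      rw [card_neighborSet_eq_degree, card_neighborSet_eq_degree, h1 v1, h2 v2]
    obtain ⟨σ⟩ := Fintype.card_eq.mp hcard
    exact ⟨wlEquiv_of_isRegularOfDegree h1 h2 l v1 v2, σ,
      fun w => wlEquiv_of_isRegularOfDegree h1 h2 l w (σ w)⟩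

end Refinement

/-- The jumps `±2` in `ℤ/8` link `0, 2, 4, 6` and `1, 3, 5, 7` into two disjoint 4-cycles. -/
abbrev twoSquares : SimpleGraph (Fin 8) := circulantGraph {2}

lemma cycleGraph_eight_isRegularOfDegree : (cycleGraph 8).IsRegularOfDegree 2 :=
  fun _ => cycleGraph_degree_three_le

lemma twoSquares_isRegularOfDegree : twoSquares.IsRegularOfDegree 2 := by
  unfold IsRegularOfDegree; decide

lemma card_Qhop_two_cycleGraph_eight (t : Kernel) : #(Qhop t (cycleGraph 8) 0 2) = 2 := by
  cases t
  · rw [Qhop, Qspd_two]; decide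
  · rw [Qhop, Qgd_two]; decide

lemma card_Qhop_two_twoSquares (t : Kernel) (v : Fin 8) : #(Qhop t twoSquares v 2) = 1 := by
  cases t
  · rw [Qhop, Qspd_two]; revert v; decide
  · rw [Qhop, Qgd_two]; revert v; decide

/-- (i) For K ≥ 2 and any kernel t, equal K-hop refinement colors at
iteration l imply equal 1-WL colors at iteration l, for arbitrary finite simple graphs
and vertices. (ii) There exist finite simple graphs of the same size whose multisets of
1-WL colors agree at every iteration while the multisets of 2-hop (kernel t) refinement
colors already differ after one iteration. Hence proper K-hop message passing with
K > 1 is strictly more powerful than 1-hop message passing. -/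
theorem khop_strictly_more_powerful_than_1hop (K : ℕ) (hK : 2 ≤ K) (t : Kernel) :
    (∀ (V1 V2 : Type) [Fintype V1] [Fintype V2]
        (G1 : SimpleGraph V1) (G2 : SimpleGraph V2) (l : ℕ) (v1 : V1) (v2 : V2),
        KhopEquiv K t G1 G2 l v1 v2 → WLEquiv G1 G2 l v1 v2) ∧
    (∃ (n : ℕ) (G1 G2 : SimpleGraph (Fin n)),
        (∀ l : ℕ, ∃ σ : Fin n ≃ Fin n, ∀ v, WLEquiv G1 G2 l v (σ v)) ∧
        ¬ ∃ σ : Fin n ≃ Fin n, ∀ v, KhopEquiv 2 t G1 G2 1 v (σ v)) := by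
  refine ⟨fun _ _ _ _ _ _ _ _ _ => wlEquiv_of_khopEquiv (by omega),
    8, cycleGraph 8, twoSquares, fun l => ⟨Equiv.refl _, fun v => ?_⟩, ?_⟩
  · exact wlEquiv_of_isRegularOfDegree
      cycleGraph_eight_isRegularOfDegree twoSquares_isRegularOfDegree l v v
  · rintro ⟨σ, hσ⟩
    have h2hop := card_Qhop_eq_of_khopEquiv (hσ 0) one_le_two le_rfl
    rw [card_Qhop_two_cycleGraph_eight, card_Qhop_two_twoSquares] at h2hop
    omega

end KHopStmt2
end

section
/- The triangular prism and K_{3,3} are both 3-regular simple graphs on 6 vertices and are not isomorphic. For every vertex v of the triangular prism, the 2nd hop neighborhood under the graph-diffusion kernel satisfies |Q^{2,gd}_v| = 4, whereas for every vertex v of K_{3,3} it satisfies |Q^{2,gd}_v| = 2. Hence the multisets of 2-hop graph-diffusion node configurations of the two graphs differ. -/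
/-!
STATEMENT 12: The triangular prism and K_{3,3} are non-isomorphic 3-regular simple
graphs on 6 vertices; under the graph-diffusion kernel, |Q^{2,gd}_v| = 4 for every
vertex of the prism and |Q^{2,gd}_v| = 2 for every vertex of K_{3,3}, so the multisets
of 2-hop graph-diffusion node configurations of the two graphs differ.
-/

namespace KHopStmt12

/-- The triangular prism `K₃ □ K₂` on `Fin 6`: the triangles `{0,1,2}` and `{3,4,5}`
(equal `i/3`) joined by the perfect matching `(0,3), (1,4), (2,5)` (equal `i % 3`). -/
def prism : SimpleGraph (Fin 6) :=
  SimpleGraph.fromRel fun i j => i.val / 3 = j.val / 3 ∨ i.val % 3 = j.val % 3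

/-- The complete bipartite graph `K_{3,3}` on `Fin 6`, with parts the even and the odd
vertices. -/
def K33 : SimpleGraph (Fin 6) :=
  SimpleGraph.fromRel fun i j => i.val % 2 ≠ j.val % 2

instance : DecidableRel prism.Adj := fun a b =>
  decidable_of_iff _
    (SimpleGraph.fromRel_adj
      (fun i j : Fin 6 => i.val / 3 = j.val / 3 ∨ i.val % 3 = j.val % 3) a b).symm

instance : DecidableRel K33.Adj := fun a b =>
  decidable_of_iff _
    (SimpleGraph.fromRel_adj (fun i j : Fin 6 => i.val % 2 ≠ j.val % 2) a b).symm

/-- k-th hop neighbors under the graph-diffusion kernel: vertices `u ≠ v` admitting a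
walk of length exactly `k` from `v` to `u`. -/
noncomputable def Qgd {V : Type*} [Fintype V] (G : SimpleGraph V) (v : V) (k : ℕ) :
    Finset V := by
  classical
  exact if k = 0 then {v}
    else Finset.univ.filter fun u => u ≠ v ∧ ∃ w : G.Walk v u, w.length = k

/-- The K-hop node configuration under the graph-diffusion kernel,
`A^{K,gd}_{v,G} = (|Q^{1,gd}|, ..., |Q^{K,gd}|)`. -/
noncomputable def configGd {V : Type*} [Fintype V] (K : ℕ) (G : SimpleGraph V)
    (v : V) : List ℕ :=
  (List.range K).map fun i => (Qgd G v (i + 1)).card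

lemma exists_walk_two {V : Type*} (G : SimpleGraph V) (v u : V) :
    (∃ w : G.Walk v u, w.length = 2) ↔ ∃ x, G.Adj v x ∧ G.Adj x u := by
  constructor
  · rintro ⟨w, hw⟩
    cases w with
    | nil => simp at hw
    | cons h p =>
      cases p with
      | nil => simp at hw
      | cons h' q =>
        cases q with
        | nil => exact ⟨_, h, h'⟩
        | cons h'' r => simp [Nat.succ_inj] at hw
  · rintro ⟨x, h1, h2⟩
    exact ⟨.cons h1 (.cons h2 .nil), rfl⟩

lemma Qgd_two_card {V : Type*} [Fintype V] [DecidableEq V] (G : SimpleGraph V)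
    [DecidableRel G.Adj] (v : V) :
    (Qgd G v 2).card =
      (Finset.univ.filter fun u => u ≠ v ∧ ∃ x, G.Adj v x ∧ G.Adj x u).card := by
  congr 1
  unfold Qgd
  rw [if_neg (by norm_num)]
  ext u
  simp [exists_walk_two]

lemma prism_card (v : Fin 6) : (Qgd prism v 2).card = 4 := by
  rw [Qgd_two_card]
  revert v; decide

lemma K33_card (v : Fin 6) : (Qgd K33 v 2).card = 2 := by
  rw [Qgd_two_card]
  revert v; decide

/-- The prism and `K_{3,3}` are 3-regular simple graphs on 6 vertices
and are not isomorphic; every prism vertex has `|Q^{2,gd}_v| = 4` while every `K_{3,3}`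
vertex has `|Q^{2,gd}_v| = 2`; hence the multisets of 2-hop graph-diffusion node
configurations of the two graphs differ. -/
theorem prism_K33_distinguished_by_gd_kernel :
    prism.IsRegularOfDegree 3 ∧ K33.IsRegularOfDegree 3 ∧
    Fintype.card (Fin 6) = 6 ∧
    IsEmpty (prism ≃g K33) ∧
    (∀ v : Fin 6, (Qgd prism v 2).card = 4) ∧
    (∀ v : Fin 6, (Qgd K33 v 2).card = 2) ∧
    (Finset.univ.val.map fun v : Fin 6 => configGd 2 prism v) ≠
      (Finset.univ.val.map fun v : Fin 6 => configGd 2 K33 v) := by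
  refine ⟨fun v => by fin_cases v <;> rfl, fun v => by fin_cases v <;> rfl, rfl, ?_, prism_card, K33_card, ?_⟩
  · constructor
    intro f
    have h01 : prism.Adj 0 1 := by decide
    have h12 : prism.Adj 1 2 := by decide
    have h02 : prism.Adj 0 2 := by decide
    have k01 : K33.Adj (f 0) (f 1) := f.map_rel_iff.mpr h01
    have k12 : K33.Adj (f 1) (f 2) := f.map_rel_iff.mpr h12
    have k02 : K33.Adj (f 0) (f 2) := f.map_rel_iff.mpr h02
    have notri : ∀ a b c : Fin 6, ¬(K33.Adj a b ∧ K33.Adj b c ∧ K33.Adj a c) := by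
      decide
    exact notri (f 0) (f 1) (f 2) ⟨k01, k12, k02⟩
  · intro h
    have hmem : configGd 2 prism 0 ∈
        (Finset.univ.val.map fun v : Fin 6 => configGd 2 prism v) :=
      Multiset.mem_map.mpr ⟨0, Finset.mem_univ_val _, rfl⟩
    rw [h] at hmem
    obtain ⟨v, -, hv⟩ := Multiset.mem_map.mp hmem
    have h2 : (Qgd K33 v 2).card = (Qgd prism 0 2).card := by
      have := congrArg (fun l => l.getD 1 0) hv
      simpa [configGd, List.range_succ] using this
    rw [prism_card, K33_card] at h2
    exact absurd h2 (by norm_num)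

end KHopStmt12
end

section
/- In the Shrikhande graph, every vertex has exactly 6 neighbors, and for every vertex v the subgraph induced on the neighborhood of v is 2-regular (so it has exactly 6 edges = peripheral edges), connected, and isomorphic to the cycle C_6. Consequently, since in the 4×4 rook's graph the induced neighborhood of every vertex is a disjoint union of two triangles, the Shrikhande graph and the 4×4 rook's graph are not isomorphic. -/
/-!
Both graphs are Cayley graphs on `(ℤ/4ℤ)²`, so translations act transitively on the vertices
by automorphisms and it suffices to look at the neighbourhood of `0`. In the Shrikhande graph
this neighbourhood is the connection set itself, which is the hexagon
`(1,0), (1,1), (0,1), (3,0), (3,3), (0,3)`; in the rook's graph it is the row and the column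
through `0`, two triangles. A 2-regular graph on six vertices has six edges by the handshake
lemma. An isomorphism of the two graphs would restrict to an isomorphism of neighbourhoods, but
an even cycle is bipartite, hence triangle-free.
-/

namespace KHopStmt16

/-- The connection set of the Shrikhande graph. -/
def shrikhandeSet : Finset (ZMod 4 × ZMod 4) :=
  {(1, 0), (3, 0), (0, 1), (0, 3), (1, 1), (3, 3)}

/-- The Shrikhande graph: the Cayley graph on `(ℤ/4ℤ) × (ℤ/4ℤ)` with connection set
`{(1,0), (3,0), (0,1), (0,3), (1,1), (3,3)}`. -/
def Shrikhande : SimpleGraph (ZMod 4 × ZMod 4) :=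
  SimpleGraph.fromRel fun a b => a - b ∈ shrikhandeSet

/-- The 4×4 rook's graph on `(ℤ/4ℤ) × (ℤ/4ℤ)`: two distinct vertices are adjacent iff
they agree in the first coordinate or agree in the second coordinate. -/
def RookGraph : SimpleGraph (ZMod 4 × ZMod 4) :=
  SimpleGraph.fromRel fun a b => a.1 = b.1 ∨ a.2 = b.2

instance : DecidableRel Shrikhande.Adj := fun a b =>
  decidable_of_iff _
    (SimpleGraph.fromRel_adj
      (fun a b : ZMod 4 × ZMod 4 => a - b ∈ shrikhandeSet) a b).symm

instance : DecidableRel RookGraph.Adj := fun a b =>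
  decidable_of_iff _
    (SimpleGraph.fromRel_adj
      (fun a b : ZMod 4 × ZMod 4 => a.1 = b.1 ∨ a.2 = b.2) a b).symm

instance (v : ZMod 4 × ZMod 4) : DecidablePred (· ∈ Shrikhande.neighborSet v) :=
  fun u => inferInstanceAs (Decidable (Shrikhande.Adj v u))

instance (v : ZMod 4 × ZMod 4) : DecidablePred (· ∈ RookGraph.neighborSet v) :=
  fun u => inferInstanceAs (Decidable (RookGraph.Adj v u))

/-- The disjoint union of two triangles, as a graph on `Fin 6`. -/
def twoTriangles : SimpleGraph (Fin 6) :=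
  SimpleGraph.fromRel fun i j => i.val / 3 = j.val / 3

/-- The number of peripheral edges of the 1-hop neighborhood of `v`: edges of `G` with
both endpoints adjacent to `v`. -/
noncomputable def periEdgeCount {V : Type*} [Fintype V] (G : SimpleGraph V) (v : V) :
    ℕ := by
  classical
  exact (G.edgeFinset.filter fun e => ∀ x ∈ e, x ∈ G.neighborSet v).card

end KHopStmt16

namespace SimpleGraph

variable {V W : Type*} {G : SimpleGraph V} {G' : SimpleGraph W}

theorem IsRegularOfDegree.of_iso [Fintype V] [DecidableRel G.Adj] [Fintype W]
    [DecidableRel G'.Adj] {d : ℕ} (f : G ≃g G') (h : G.IsRegularOfDegree d) :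
    G'.IsRegularOfDegree d := fun w => by
  rw [← f.apply_symm_apply w, f.degree_eq]
  exact h _

theorem IsRegularOfDegree.two_mul_card_edgeFinset [Fintype V] [DecidableRel G.Adj] {d : ℕ}
    (h : G.IsRegularOfDegree d) : 2 * G.edgeFinset.card = Fintype.card V * d := by
  rw [← sum_degrees_eq_twice_card_edges, Finset.sum_congr rfl fun v _ => h v,
    Finset.sum_const, Finset.card_univ, smul_eq_mul]

theorem cycleGraph_isRegularOfDegree (n : ℕ) : (cycleGraph (n + 3)).IsRegularOfDegree 2 :=
  fun _ => cycleGraph_degree_three_le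

theorem cycleGraph_cliqueFree_three_of_even {n : ℕ} (h : Even n) : (cycleGraph n).CliqueFree 3 :=
  (cycleGraph.bicoloring_of_even n h).colorable.cliqueFree (by simp)

theorem Iso.bijOn_neighborSet (f : G ≃g G') {v : V} {w : W} (h : f v = w) :
    Set.BijOn f (G.neighborSet v) (G'.neighborSet w) := by
  subst h
  refine ⟨fun u hu => f.map_adj_iff.mpr hu, f.injective.injOn, fun u hu => ⟨f.symm u, ?_, ?_⟩⟩
  · rwa [mem_neighborSet, ← f.map_adj_iff, f.apply_symm_apply]
  · exact f.apply_symm_apply u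

def Iso.induceNeighborSet (f : G ≃g G') (v : V) :
    G.induce (G.neighborSet v) ≃g G'.induce (G'.neighborSet (f v)) :=
  f.induce (f.bijOn_neighborSet rfl)

section TranslationInvariant

variable {α : Type*} [AddGroup α]

def IsTranslationInvariant (G : SimpleGraph α) : Prop :=
  ∀ a x y, G.Adj (x + a) (y + a) ↔ G.Adj x y

variable {G : SimpleGraph α}

def IsTranslationInvariant.addRightIso (hG : G.IsTranslationInvariant) (a : α) : G ≃g G where
  toEquiv := Equiv.addRight a
  map_rel_iff' := hG a _ _

def IsTranslationInvariant.neighborhoodIso (hG : G.IsTranslationInvariant) (v : α) :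
    G.induce (G.neighborSet 0) ≃g G.induce (G.neighborSet v) :=
  (hG.addRightIso v).induce ((hG.addRightIso v).bijOn_neighborSet (zero_add v))

end TranslationInvariant

end SimpleGraph

namespace KHopStmt16

open SimpleGraph

theorem periEdgeCount_eq_card_edgeFinset_induce {V : Type*} [Fintype V] (G : SimpleGraph V)
    (v : V) [Fintype (G.induce (G.neighborSet v)).edgeSet] :
    periEdgeCount G v = (G.induce (G.neighborSet v)).edgeFinset.card := by
  classical
  obtain rfl : ‹Fintype (G.induce (G.neighborSet v)).edgeSet› = fintypeEdgeSet _ :=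
    Subsingleton.elim _ _
  rw [← Finset.card_map (Function.Embedding.subtype _).sym2Map, map_edgeFinset_induce,
    periEdgeCount]
  congr 1
  ext e
  simp [Finset.mem_sym2_iff]

theorem shrikhande_isTranslationInvariant : Shrikhande.IsTranslationInvariant := by
  simp only [IsTranslationInvariant, Shrikhande, fromRel_adj, add_sub_add_right_eq_sub, ne_eq,
    add_left_inj, implies_true]

theorem rookGraph_isTranslationInvariant : RookGraph.IsTranslationInvariant := by
  simp only [IsTranslationInvariant, RookGraph, fromRel_adj, ne_eq, add_left_inj, Prod.fst_add,
    Prod.snd_add, implies_true]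

def hexagon : Fin 6 → ZMod 4 × ZMod 4 := ![(1, 0), (1, 1), (0, 1), (3, 0), (3, 3), (0, 3)]

noncomputable def cycleGraphIsoShrikhandeNeighborhood :
    cycleGraph 6 ≃g Shrikhande.induce (Shrikhande.neighborSet 0) where
  toEquiv := Equiv.ofBijective (fun i => ⟨hexagon i, by revert i; decide⟩) (by decide)
  map_rel_iff' := by decide

def rookCross : Fin 6 → ZMod 4 × ZMod 4 := ![(0, 1), (0, 2), (0, 3), (1, 0), (2, 0), (3, 0)]

instance : DecidableRel twoTriangles.Adj := fun a b =>
  decidable_of_iff _ (fromRel_adj (fun i j : Fin 6 => i.val / 3 = j.val / 3) a b).symm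

noncomputable def twoTrianglesIsoRookNeighborhood :
    twoTriangles ≃g RookGraph.induce (RookGraph.neighborSet 0) where
  toEquiv := Equiv.ofBijective (fun i => ⟨rookCross i, by revert i; decide⟩) (by decide)
  map_rel_iff' := by decide

theorem twoTriangles_not_cliqueFree_three : ¬twoTriangles.CliqueFree 3 :=
  (show twoTriangles.IsNClique 3 {0, 1, 2} by decide).not_cliqueFree

theorem isEmpty_cycleGraph_six_iso_twoTriangles : IsEmpty (cycleGraph 6 ≃g twoTriangles) :=
  ⟨fun f => twoTriangles_not_cliqueFree_three
    ((cycleGraph_cliqueFree_three_of_even (n := 6) (by decide)).comap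
      ⟨f.symm.toEmbedding.toCopy⟩)⟩

noncomputable def shrikhandeNeighborhoodIso (v : ZMod 4 × ZMod 4) :
    Shrikhande.induce (Shrikhande.neighborSet v) ≃g cycleGraph 6 :=
  (cycleGraphIsoShrikhandeNeighborhood.trans
    (shrikhande_isTranslationInvariant.neighborhoodIso v)).symm

noncomputable def rookNeighborhoodIso (v : ZMod 4 × ZMod 4) :
    RookGraph.induce (RookGraph.neighborSet v) ≃g twoTriangles :=
  (twoTrianglesIsoRookNeighborhood.trans (rookGraph_isTranslationInvariant.neighborhoodIso v)).symm

theorem shrikhande_neighborhood_isRegularOfDegree (v : ZMod 4 × ZMod 4) :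
    (Shrikhande.induce (Shrikhande.neighborSet v)).IsRegularOfDegree 2 :=
  (cycleGraph_isRegularOfDegree 3).of_iso (shrikhandeNeighborhoodIso v).symm

theorem shrikhande_card_neighborSet (v : ZMod 4 × ZMod 4) :
    Fintype.card (Shrikhande.neighborSet v) = 6 := by
  rw [Fintype.card_congr (shrikhandeNeighborhoodIso v).toEquiv, Fintype.card_fin]

/-- The Shrikhande graph is 6-regular; for every vertex `v` the
subgraph induced on the neighborhood of `v` is 2-regular, has exactly 6 peripheral
edges, is connected, and is isomorphic to the cycle `C₆`. Since every induced
neighborhood in the 4×4 rook's graph is a disjoint union of two triangles, the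
Shrikhande graph and the rook's graph are not isomorphic. -/
theorem shrikhande_neighborhoods_are_hexagons :
    Shrikhande.IsRegularOfDegree 6 ∧
    (∀ v : ZMod 4 × ZMod 4,
      (Shrikhande.induce (Shrikhande.neighborSet v)).IsRegularOfDegree 2 ∧
      periEdgeCount Shrikhande v = 6 ∧
      (Shrikhande.induce (Shrikhande.neighborSet v)).Connected ∧
      Nonempty ((Shrikhande.induce (Shrikhande.neighborSet v)) ≃g
        SimpleGraph.cycleGraph 6)) ∧
    (∀ v : ZMod 4 × ZMod 4,
      Nonempty ((RookGraph.induce (RookGraph.neighborSet v)) ≃g twoTriangles)) ∧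
    IsEmpty (Shrikhande ≃g RookGraph) := by
  refine ⟨fun v => ?_, fun v => ⟨shrikhande_neighborhood_isRegularOfDegree v, ?_,
    (shrikhandeNeighborhoodIso v).connected_iff.mpr cycleGraph_connected,
    ⟨shrikhandeNeighborhoodIso v⟩⟩, fun v => ⟨rookNeighborhoodIso v⟩, ⟨fun f => ?_⟩⟩
  · rw [← card_neighborSet_eq_degree, shrikhande_card_neighborSet]
  · have handshake := (shrikhande_neighborhood_isRegularOfDegree v).two_mul_card_edgeFinset
    rw [shrikhande_card_neighborSet] at handshake
    rw [periEdgeCount_eq_card_edgeFinset_induce]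
    omega
  · exact isEmpty_cycleGraph_six_iso_twoTriangles.false <|
      (shrikhandeNeighborhoodIso 0).symm.trans
        ((f.induceNeighborSet 0).trans (rookNeighborhoodIso (f 0)))

end KHopStmt16
end

section
/- Fix K ≥ 1 and a kernel t ∈ {spd, gd}. (i) For every single layer of K-hop message passing (arbitrary functions MES_k, UPD_k, COMBINE) applied to finite simple graphs with constant initial node features and no edge features, the output h^1_v is a function of the node configuration alone: for all graphs G1, G2 and vertices v1 ∈ G1, v2 ∈ G2, if A^{K,t}_{v1,G1} = A^{K,t}_{v2,G2} then h^1_{v1} = h^1_{v2}. (ii) There is a choice of injective such functions for which, conversely, h^1_{v1} = h^1_{v2} implies A^{K,t}_{v1,G1} = A^{K,t}_{v2,G2}. In other words, the first layer of K-hop message passing is equivalent to injecting the node configuration into each node label. -/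
/-!
STATEMENT 18: The first layer of K-hop message passing on constant initial features is
equivalent to injecting the K-hop node configuration into each node label: (i) the
layer output is always a function of the node configuration; (ii) for a suitable
choice of injective message/update/combine functions it determines the configuration.
-/

namespace KHopStmt18

/-- The two kernels of K-hop neighbors. -/
inductive Kernel
  | spd
  | gd

/-- k-th hop neighbors under the shortest-path-distance kernel: vertices at graph
distance exactly `k` from `v`. -/
noncomputable def Qspd {V : Type*} [Fintype V] (G : SimpleGraph V) (v : V) (k : ℕ) :
    Finset V := by
  classical
  exact Finset.univ.filter fun u => G.Reachable v u ∧ G.dist v u = k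

/-- k-th hop neighbors under the graph-diffusion kernel: vertices `u ≠ v` admitting a
walk of length exactly `k` from `v` to `u`. -/
noncomputable def Qgd {V : Type*} [Fintype V] (G : SimpleGraph V) (v : V) (k : ℕ) :
    Finset V := by
  classical
  exact if k = 0 then {v}
    else Finset.univ.filter fun u => u ≠ v ∧ ∃ w : G.Walk v u, w.length = k

/-- k-th hop neighbors under kernel `t`. -/
noncomputable def Qhop {V : Type*} [Fintype V] (t : Kernel) (G : SimpleGraph V) (v : V)
    (k : ℕ) : Finset V :=
  match t with
  | .spd => Qspd G v k
  | .gd => Qgd G v k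

/-- The K-hop node configuration `A^{K,t}_{v,G} = (|Q^{1,t}|, ..., |Q^{K,t}|)`. -/
noncomputable def config {V : Type*} [Fintype V] (t : Kernel) (K : ℕ)
    (G : SimpleGraph V) (v : V) : List ℕ :=
  (List.range K).map fun i => (Qhop t G v (i + 1)).card

/-- The output of one layer of K-hop message passing with kernel `t` on constant
initial node features `h0` (and no edge features):
`m^k_v = MES k {{h0 : u ∈ Q^{k,t}_v}}`, `h^k_v = UPD k m^k_v h0`,
`h^1_v = COMBINE {{h^k_v : k = 1,…,K}}`. -/
noncomputable def layerOne {V : Type*} [Fintype V] (t : Kernel) (K : ℕ)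
    {H M : Type} (h0 : H) (MES : ℕ → Multiset H → M) (UPD : ℕ → M → H → H)
    (COMBINE : Multiset H → H) (G : SimpleGraph V) (v : V) : H :=
  COMBINE
    (((List.range K).map fun k =>
        UPD (k + 1) (MES (k + 1) ((Qhop t G v (k + 1)).val.map fun _ => h0)) h0 :
      List H) : Multiset H)

/-- Rewrite `layerOne` purely in terms of the cardinalities of the hop sets. -/
lemma layerOne_card {V : Type*} [Fintype V] (t : Kernel) (K : ℕ)
    {H M : Type} (h0 : H) (MES : ℕ → Multiset H → M) (UPD : ℕ → M → H → H)
    (COMBINE : Multiset H → H) (G : SimpleGraph V) (v : V) :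
    layerOne t K h0 MES UPD COMBINE G v =
      COMBINE
        (((List.range K).map fun k =>
            UPD (k + 1)
              (MES (k + 1) (Multiset.replicate (Qhop t G v (k + 1)).card h0)) h0 :
          List H) : Multiset H) := by
  unfold layerOne
  congr 2
  apply List.map_congr_left
  intro k _
  congr 2
  rw [show (fun _ : V => h0) = Function.const V h0 from rfl, Multiset.map_const]
  rfl

lemma config_card_eq {V1 V2 : Type*} [Fintype V1] [Fintype V2] {t : Kernel} {K : ℕ}
    {G1 : SimpleGraph V1} {G2 : SimpleGraph V2} {v1 : V1} {v2 : V2}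
    (h : config t K G1 v1 = config t K G2 v2) :
    ∀ k < K, (Qhop t G1 v1 (k + 1)).card = (Qhop t G2 v2 (k + 1)).card := by
  intro k hk
  have := congrArg (fun l => l[k]?) h
  simpa [config, List.getElem?_map, List.getElem?_range, hk] using this

/-- (i) For arbitrary message/update/combine functions, the one-layer
K-hop output on constant initial features depends only on the node configuration.
(ii) There is a choice of injective such functions for which the one-layer output
conversely determines the node configuration. -/
theorem first_layer_equals_node_configuration (K : ℕ) (hK : 1 ≤ K) (t : Kernel) :
    (∀ {H M : Type} (h0 : H) (MES : ℕ → Multiset H → M) (UPD : ℕ → M → H → H)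
        (COMBINE : Multiset H → H)
        (V1 V2 : Type) [Fintype V1] [Fintype V2]
        (G1 : SimpleGraph V1) (G2 : SimpleGraph V2) (v1 : V1) (v2 : V2),
        config t K G1 v1 = config t K G2 v2 →
        layerOne t K h0 MES UPD COMBINE G1 v1 = layerOne t K h0 MES UPD COMBINE G2 v2) ∧
    (∃ (H M : Type) (h0 : H) (MES : ℕ → Multiset H → M) (UPD : ℕ → M → H → H)
        (COMBINE : Multiset H → H),
        (∀ k, Function.Injective (MES k)) ∧
        (∀ k, Function.Injective fun p : M × H => UPD k p.1 p.2) ∧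
        Function.Injective COMBINE ∧
        ∀ (V1 V2 : Type) [Fintype V1] [Fintype V2]
          (G1 : SimpleGraph V1) (G2 : SimpleGraph V2) (v1 : V1) (v2 : V2),
          layerOne t K h0 MES UPD COMBINE G1 v1 = layerOne t K h0 MES UPD COMBINE G2 v2 →
          config t K G1 v1 = config t K G2 v2) := by
  classical
  constructor
  · intro H M h0 MES UPD COMBINE V1 V2 _ _ G1 G2 v1 v2 hcfg
    rw [layerOne_card, layerOne_card]
    congr 2
    apply List.map_congr_left
    intro k hk
    rw [config_card_eq hcfg k (List.mem_range.mp hk)]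
  · refine ⟨ℕ, ℕ, 0, fun k s => Nat.pair k (Encodable.encode s),
      fun _ m h => Nat.pair m h, fun s => Encodable.encode s, ?_, ?_, ?_, ?_⟩
    · intro k s1 s2 h
      exact Encodable.encode_injective ((Nat.pair_eq_pair.mp h).2)
    · intro k p q h
      obtain ⟨h1, h2⟩ := Nat.pair_eq_pair.mp h
      exact Prod.ext h1 h2
    · intro s1 s2 h
      exact Encodable.encode_injective h
    · intro V1 V2 _ _ G1 G2 v1 v2 h
      rw [layerOne_card, layerOne_card] at h
      have hm := Encodable.encode_injective h
      rw [Multiset.coe_eq_coe] at hm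
      have key : ∀ k < K, (Qhop t G1 v1 (k + 1)).card = (Qhop t G2 v2 (k + 1)).card := by
        intro k hk
        set F : (ℕ → ℕ) → ℕ → ℕ := fun c k =>
          Nat.pair (Nat.pair (k + 1) (Encodable.encode
            (Multiset.replicate (c k) (0 : ℕ)))) 0 with hF
        have hmem : F (fun k => (Qhop t G1 v1 (k + 1)).card) k ∈
            (List.range K).map fun j =>
              Nat.pair (Nat.pair (j + 1) (Encodable.encode
                (Multiset.replicate ((Qhop t G2 v2 (j + 1)).card) (0 : ℕ)))) 0 := by
          rw [← hm.mem_iff]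
          exact List.mem_map.mpr ⟨k, List.mem_range.mpr hk, rfl⟩
        obtain ⟨j, _, hj⟩ := List.mem_map.mp hmem
        simp only [hF] at hj
        obtain ⟨h1, -⟩ := Nat.pair_eq_pair.mp hj
        obtain ⟨h2, h3⟩ := Nat.pair_eq_pair.mp h1
        have := Encodable.encode_injective h3
        have hcard := congrArg Multiset.card this
        simp only [Multiset.card_replicate] at hcard
        have hjk : j = k := by omega
        subst hjk
        exact hcard.symm
      unfold config
      apply List.map_congr_left
      intro k hk
      exact key k (List.mem_range.mp hk)

end KHopStmt18
end
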